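/- arXiv:2202.03523 — 3 statements merged into one kernel-verified Lean document; each statement's English description precedes it below -/
import Mathlib

section
/- Assume Assumptions A1 and A2 hold. Then a family σ_Λ of states on the subsystems X ∈ Λ satisfies σ_Λ ∉ C_{R|T,Λ} if and only if there exists a family (W_X)_{X∈Λ} of positive semidefinite matrices on the subsystems X such that sup_{τ_Λ ∈ C_{R|T,Λ}} ∑_{X∈Λ} tr(τ_X W_X) < ∑_{X∈Λ} tr(σ_X W_X) (all these traces being real since the matrices are Hermitian). -/
open scoped ComplexOrder ENNReal Kronecker

namespace RMP

variable {ι : Type} [Fintype ι] [DecidableEq ι]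
variable (d : ι → Type) [∀ i, Fintype (d i)] [∀ i, DecidableEq (d i)] [∀ i, Nonempty (d i)]

/-- The space of matrices on the global system. -/
abbrev GlobalMat : Type := Matrix (∀ i, d i) (∀ i, d i) ℂ

/-- The space of matrices on the subsystem `X`. -/
abbrev SubMat (X : Finset ι) : Type :=
  Matrix (∀ i : X, d i.1) (∀ i : X, d i.1) ℂ

/-- A quantum state: positive semidefinite with unit trace. -/
def IsState {m : Type} [Fintype m] (ρ : Matrix m m ℂ) : Prop :=
  ρ.PosSemidef ∧ ρ.trace = 1

/-- Combine an assignment on `X` with an assignment on its complement. -/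
def combine (X : Finset ι) (a : ∀ i : X, d i.1) (c : ∀ i : (Xᶜ : Finset ι), d i.1) :
    ∀ i, d i := fun i =>
  if h : i ∈ X then a ⟨i, h⟩ else c ⟨i, Finset.mem_compl.mpr h⟩

/-- Partial trace onto subsystem `X`. -/
noncomputable def ptrace (X : Finset ι) (ρ : GlobalMat d) : SubMat d X :=
  Matrix.of fun a b =>
    ∑ c : ∀ i : (Xᶜ : Finset ι), d i.1, ρ (combine d X a c) (combine d X b c)

variable (Λ : Finset (Finset ι)) (T : Finset ι) (F : Set (SubMat d T))

/-- The set `C_{R|T,Λ}` of `R`-free compatible families of marginals. -/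
def CRT : Set (∀ X : Λ, SubMat d X.1) :=
  {σ | ∃ ρ : GlobalMat d, IsState ρ ∧ (∀ X : Λ, ptrace d X.1 ρ = σ X) ∧ ptrace d T ρ ∈ F}

/-- The cone `𝒞_{R|T}`. -/
def coneRT : Set (GlobalMat d) :=
  {V | ∃ α : ℝ, 0 ≤ α ∧ ∃ η : GlobalMat d, IsState η ∧ ptrace d T η ∈ F ∧ V = α • η}

/-- A proper cone of global matrices. -/
def IsProperCone (C : Set (GlobalMat d)) : Prop :=
  C.Nonempty ∧ Convex ℝ C ∧ IsClosed C ∧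
    (∀ (α : ℝ) (V : GlobalMat d), 0 ≤ α → V ∈ C → α • V ∈ C) ∧
    (∀ V : GlobalMat d, V ∈ C → -V ∈ C → V = 0)

/-- The primal value `t(σ_Λ)`. -/
noncomputable def primal (σ : ∀ X : Λ, SubMat d X.1) : ℝ≥0∞ :=
  sInf {t | ∃ V ∈ coneRT d T F,
    (∀ X : Λ, (ptrace d X.1 V - σ X).PosSemidef) ∧ t = ENNReal.ofReal V.trace.re}

/-- The dual value `s(σ_Λ)`. -/
noncomputable def dual (σ : ∀ X : Λ, SubMat d X.1) : ℝ≥0∞ :=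
  sSup {s | ∃ Y : ∀ X : Λ, SubMat d X.1,
    (∀ X : Λ, (Y X).PosSemidef) ∧
    (∀ τ ∈ CRT d Λ T F, (∑ X : Λ, (τ X * Y X).trace.re) ≤ 1) ∧
    s = ENNReal.ofReal (∑ X : Λ, (σ X * Y X).trace.re)}

end RMP

namespace RMP

set_option linter.unusedSectionVars false
set_option linter.unusedVariables false

open Matrix

attribute [local instance] Matrix.normedAddCommGroup Matrix.normedSpace

variable {ι : Type} [Fintype ι] [DecidableEq ι]
variable (d : ι → Type) [∀ i, Fintype (d i)] [∀ i, DecidableEq (d i)] [∀ i, Nonempty (d i)]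

/-- split/combine equivalence -/
def combineEquiv (X : Finset ι) :
    ((∀ i : X, d i.1) × (∀ i : (Xᶜ : Finset ι), d i.1)) ≃ (∀ i, d i) where
  toFun p := combine d X p.1 p.2
  invFun f := (fun i => f i.1, fun i => f i.1)
  left_inv p := by
    ext i
    · simp [combine, i.2]
    · have : ¬ (i.1 ∈ X) := Finset.mem_compl.mp i.2
      simp [combine, this]
  right_inv f := by
    ext i
    by_cases h : i ∈ X <;> simp [combine, h]

lemma trace_ptrace (X : Finset ι) (ρ : GlobalMat d) :
    (ptrace d X ρ).trace = ρ.trace := by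
  classical
  have h := Equiv.sum_comp (combineEquiv d X) (fun f => ρ f f)
  rw [Fintype.sum_prod_type] at h
  simpa [Matrix.trace, Matrix.diag, ptrace, combineEquiv] using h

/-- ptrace as an `ℝ`-linear map. -/
noncomputable def ptraceL (X : Finset ι) : GlobalMat d →ₗ[ℝ] SubMat d X where
  toFun := ptrace d X
  map_add' ρ ρ' := by
    ext a b
    simp [ptrace, Finset.sum_add_distrib]
  map_smul' r ρ := by
    ext a b
    simp [ptrace, Finset.smul_sum]

lemma ptrace_continuous (X : Finset ι) : Continuous (ptrace d X) :=
  (ptraceL d X).continuous_of_finiteDimensional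

lemma ptrace_isHermitian (X : Finset ι) {ρ : GlobalMat d} (hρ : ρ.IsHermitian) :
    (ptrace d X ρ).IsHermitian := by
  ext a b
  simp only [Matrix.conjTranspose_apply, ptrace, Matrix.of_apply, star_sum]
  exact Finset.sum_congr rfl fun c _ => hρ.apply _ _

lemma quad_expand {m : Type} [Fintype m] [DecidableEq m] (ρ : Matrix m m ℂ)
    {a b : m} (hab : a ≠ b) (c : ℂ) :
    star (Pi.single a c + Pi.single b 1) ⬝ᵥ ρ *ᵥ (Pi.single a c + Pi.single b 1)
      = star c * (ρ a a * c) + star c * ρ a b + ρ b a * c + ρ b b := by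
  have hs : star (Pi.single a c + Pi.single b (1:ℂ) : m → ℂ) = (Pi.single a (star c) + Pi.single b (1:ℂ) : m → ℂ) := by
    ext i
    simp [Pi.single_apply, apply_ite star]
  rw [hs]
  simp [Matrix.mulVec_add, Matrix.mulVec_single, add_dotProduct,
    single_dotProduct, Pi.add_apply, Pi.single_apply, hab, hab.symm]
  ring

lemma entry_abs_le {m : Type} [Fintype m] [DecidableEq m] {ρ : Matrix m m ℂ}
    (hP : ρ.PosSemidef) (ht : ρ.trace = 1) (a b : m) : ‖ρ a b‖ ≤ 1 := by
  classical
  have hdiag : ∀ i, 0 ≤ ρ i i := by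
    intro i
    have := hP.dotProduct_mulVec_nonneg (Pi.single i 1)
    simpa [dotProduct, Matrix.mulVec_single, Pi.star_apply, Pi.single_apply,
      apply_ite star, ite_mul, mul_ite, Finset.sum_ite_eq, Finset.sum_ite_eq'] using this
  have hdre : ∀ i, 0 ≤ (ρ i i).re := fun i => (Complex.le_def.mp (hdiag i)).1
  have hdim : ∀ i, (ρ i i).im = 0 := fun i => ((Complex.le_def.mp (hdiag i)).2).symm
  have hsum : ∑ i, (ρ i i).re = 1 := by
    have := congrArg Complex.re ht
    simpa [Matrix.trace, Matrix.diag, Complex.re_sum] using this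
  by_cases hab : a = b
  · subst hab
    have h1 : (ρ a a).re ≤ 1 := by
      rw [← hsum]
      exact Finset.single_le_sum (fun i _ => hdre i) (Finset.mem_univ a)
    calc ‖ρ a a‖ = |(ρ a a).re| := by
          rw [Complex.norm_def, Complex.normSq_apply, hdim a]
          simp [← sq, Real.sqrt_sq_eq_abs]
      _ = (ρ a a).re := abs_of_nonneg (hdre a)
      _ ≤ 1 := h1
  · by_cases hz : ρ a b = 0
    · simp [hz]
    set z := ρ a b with hzdef
    set r : ℝ := ‖z‖ with hrdef
    have hr : 0 < r := by simpa [hrdef] using (norm_pos_iff.mpr hz)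
    set c : ℂ := -(z / r) with hcdef
    have hq := hP.dotProduct_mulVec_nonneg (Pi.single a c + Pi.single b 1)
    rw [quad_expand ρ hab c] at hq
    have hba : ρ b a = star z := by
      conv_lhs => rw [← hP.1]
      rw [Matrix.conjTranspose_apply]
    have hzz : star z * z = ((r:ℂ))^2 := by rw [hrdef]; exact Complex.conj_mul' z
    have hr' : (r:ℂ) ≠ 0 := by exact_mod_cast hr.ne'
    have hcc : star c * c = 1 := by
      rw [hcdef]
      rw [star_neg, star_div₀, Complex.star_def, Complex.conj_ofReal, ← Complex.star_def]
      field_simp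
      linear_combination hzz
    have hcz : star c * z = -r := by
      rw [hcdef]
      rw [star_neg, star_div₀, Complex.star_def, Complex.conj_ofReal, ← Complex.star_def]
      field_simp
      linear_combination -hzz
    have hzc : star z * c = -r := by
      rw [hcdef]
      field_simp
      linear_combination -hzz
    have hform : star c * (ρ a a * c) + star c * ρ a b + ρ b a * c + ρ b b
        = ρ a a + ρ b b - 2 * r := by
      rw [hba, ← hzdef, hzc, hcz, show star c * (ρ a a * c) = (star c * c) * ρ a a by ring, hcc]
      ring
    rw [hform] at hq
    have hqre := (Complex.le_def.mp hq).1
    simp only [Complex.sub_re, Complex.add_re, Complex.mul_re, Complex.ofReal_re,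
      Complex.zero_re, Complex.ofReal_im, Complex.re_ofNat, Complex.im_ofNat] at hqre
    have hpair : (ρ a a).re + (ρ b b).re ≤ 1 := by
      rw [← hsum]
      have : ({a, b} : Finset m) ⊆ Finset.univ := Finset.subset_univ _
      calc (ρ a a).re + (ρ b b).re = ∑ i ∈ ({a, b} : Finset m), (ρ i i).re := by
            rw [Finset.sum_pair hab]
        _ ≤ ∑ i, (ρ i i).re :=
            Finset.sum_le_sum_of_subset_of_nonneg this (fun i _ _ => hdre i)
    linarith [hqre, hpair]

lemma continuous_entry {m n : Type} [Fintype m] [Fintype n] (a : m) (b : n) :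
    Continuous fun ρ : Matrix m n ℂ => ρ a b :=
  (continuous_apply b).comp (continuous_apply a)

lemma continuous_quadform {m : Type} [Fintype m] (x : m → ℂ) :
    Continuous fun ρ : Matrix m m ℂ => star x ⬝ᵥ ρ *ᵥ x := by
  show Continuous fun ρ : Matrix m m ℂ => ∑ i, star (x i) * ∑ j, ρ i j * x j
  exact continuous_finset_sum _ fun i _ =>
    continuous_const.mul (continuous_finset_sum _ fun j _ =>
      (continuous_entry i j).mul continuous_const)

lemma continuous_trace {m : Type} [Fintype m] :
    Continuous fun ρ : Matrix m m ℂ => ρ.trace :=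
  continuous_finset_sum _ fun i _ => continuous_entry i i

lemma isClosed_nonneg_complex : IsClosed {z : ℂ | 0 ≤ z} := by
  have : {z : ℂ | 0 ≤ z} = Complex.re ⁻¹' Set.Ici 0 ∩ Complex.im ⁻¹' {0} := by
    ext z
    simp [Complex.le_def, eq_comm]
  rw [this]
  exact (isClosed_Ici.preimage Complex.continuous_re).inter
    (isClosed_singleton.preimage Complex.continuous_im)

lemma isClosed_posSemidef {m : Type} [Fintype m] :
    IsClosed {ρ : Matrix m m ℂ | ρ.PosSemidef} := by
  have h1 : IsClosed {ρ : Matrix m m ℂ | ρ.IsHermitian} := by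
    have he : {ρ : Matrix m m ℂ | ρ.IsHermitian} =
        ⋂ (a : m), ⋂ (b : m), {ρ | star (ρ b a) = ρ a b} := by
      ext ρ
      simp only [Set.mem_setOf_eq, Set.mem_iInter, Matrix.IsHermitian]
      constructor
      · intro h a b
        rw [← Matrix.conjTranspose_apply, h]
      · intro h
        ext a b
        rw [Matrix.conjTranspose_apply, h]
    rw [he]
    exact isClosed_iInter fun a => isClosed_iInter fun b =>
      isClosed_eq (continuous_star.comp (continuous_entry b a)) (continuous_entry a b)
  have h2 : IsClosed (⋂ x : m → ℂ, {ρ : Matrix m m ℂ | 0 ≤ star x ⬝ᵥ ρ *ᵥ x}) :=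
    isClosed_iInter fun x => isClosed_nonneg_complex.preimage (continuous_quadform x)
  have he : {ρ : Matrix m m ℂ | ρ.PosSemidef} =
      {ρ : Matrix m m ℂ | ρ.IsHermitian} ∩ ⋂ x, {ρ | 0 ≤ star x ⬝ᵥ ρ *ᵥ x} := by
    ext ρ
    simp [Matrix.posSemidef_iff_dotProduct_mulVec, Set.mem_iInter]
  rw [he]
  exact h1.inter h2


variable {m : Type} [Fintype m] [DecidableEq m]

/-- The (generally non-Hermitian) matrix representing a real-linear functional. -/
noncomputable def witnessY (g : Matrix m m ℂ →ₗ[ℝ] ℝ) : Matrix m m ℂ :=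
  Matrix.of fun j i => ((g (Matrix.single i j 1) : ℝ) : ℂ)
    - Complex.I * ((g (Matrix.single i j Complex.I) : ℝ) : ℂ)

lemma trace_mul_witnessY (g : Matrix m m ℂ →ₗ[ℝ] ℝ) (A : Matrix m m ℂ) :
    (A * witnessY g).trace.re = g A := by
  have hA : A = ∑ i : m, ∑ j : m, Matrix.single i j (A i j) :=
    Matrix.matrix_eq_sum_single A
  conv_rhs => rw [hA]
  simp only [map_sum]
  have hlhs : (A * witnessY g).trace.re
      = ∑ i : m, ∑ j : m, (A i j * witnessY g j i).re := by
    simp only [Matrix.trace, Matrix.diag, Matrix.mul_apply]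
    rw [Complex.re_sum]
    exact Finset.sum_congr rfl fun i _ => by rw [Complex.re_sum]
  rw [hlhs]
  refine Finset.sum_congr rfl fun i _ => Finset.sum_congr rfl fun j _ => ?_
  have hdecomp : Matrix.single i j (A i j)
      = (A i j).re • Matrix.single i j (1:ℂ)
        + (A i j).im • Matrix.single i j Complex.I := by
    rw [Matrix.smul_single, Matrix.smul_single, ← Matrix.single_add]
    congr 1
    simp [Complex.real_smul]
  rw [hdecomp, map_add, _root_.map_smul, _root_.map_smul]
  simp only [witnessY, Matrix.of_apply, smul_eq_mul]
  simp [Complex.mul_re, Complex.sub_re, Complex.sub_im, Complex.mul_im]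

lemma trace_mul_conjTranspose_re (A Y : Matrix m m ℂ) (hA : A.IsHermitian) :
    (A * Yᴴ).trace.re = (A * Y).trace.re := by
  have h1 : ∀ B : Matrix m m ℂ, (A * B).trace = ∑ i : m, ∑ j : m, A i j * B j i := by
    intro B
    simp only [Matrix.trace, Matrix.diag, Matrix.mul_apply]
  rw [h1, h1, Complex.re_sum, Complex.re_sum]
  simp only [Complex.re_sum]
  rw [Finset.sum_comm]
  refine Finset.sum_congr rfl fun j _ => Finset.sum_congr rfl fun i _ => ?_
  have hAij : A i j = star (A j i) := by
    conv_lhs => rw [← hA]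
    rw [Matrix.conjTranspose_apply]
  rw [Matrix.conjTranspose_apply, hAij, ← star_mul']
  exact (Complex.conj_re _)

/-- Hermitian part of `Y`. -/
noncomputable def hermPart (Y : Matrix m m ℂ) : Matrix m m ℂ := (1/2 : ℝ) • (Y + Yᴴ)

lemma hermPart_isHermitian (Y : Matrix m m ℂ) : (hermPart Y).IsHermitian := by
  unfold hermPart
  unfold Matrix.IsHermitian
  rw [Matrix.conjTranspose_smul, Matrix.conjTranspose_add, Matrix.conjTranspose_conjTranspose]
  rw [star_trivial]
  rw [add_comm]

lemma trace_mul_hermPart_re (A Y : Matrix m m ℂ) (hA : A.IsHermitian) :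
    (A * hermPart Y).trace.re = (A * Y).trace.re := by
  unfold hermPart
  rw [Matrix.mul_smul, Matrix.mul_add, Matrix.trace_smul, Matrix.trace_add]
  rw [Complex.smul_re, Complex.add_re, trace_mul_conjTranspose_re A Y hA]
  rw [smul_eq_mul]
  ring

lemma exists_shift_posSemidef (H : Matrix m m ℂ) (hH : H.IsHermitian) :
    ∃ c : ℝ, 0 ≤ c ∧ (H + (c : ℝ) • (1 : Matrix m m ℂ)).PosSemidef := by
  classical
  set c : ℝ := ∑ i : m, |hH.eigenvalues i| with hc
  refine ⟨c, Finset.sum_nonneg fun i _ => abs_nonneg _, ?_⟩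
  have hU : (hH.eigenvectorUnitary : Matrix m m ℂ) * (star hH.eigenvectorUnitary : Matrix m m ℂ)
      = 1 := by
    exact Matrix.mem_unitaryGroup_iff.mp hH.eigenvectorUnitary.2
  have hspec := hH.spectral_theorem
  have key : H + (c : ℝ) • (1 : Matrix m m ℂ)
      = (hH.eigenvectorUnitary : Matrix m m ℂ)
        * Matrix.diagonal (fun i => ((hH.eigenvalues i + c : ℝ) : ℂ))
        * (star hH.eigenvectorUnitary : Matrix m m ℂ) := by
    conv_lhs => rw [hspec, ← hU]
    have : Matrix.diagonal (fun i => ((hH.eigenvalues i + c : ℝ) : ℂ))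
        = Matrix.diagonal ((fun x : ℝ => (x : ℂ)) ∘ hH.eigenvalues) + (c : ℝ) • 1 := by
      ext i j
      rcases eq_or_ne i j with rfl | h
      · simp [Matrix.smul_apply, Matrix.one_apply_eq, Complex.real_smul]
      · simp [Matrix.diagonal_apply_ne _ h, Matrix.one_apply_ne h, Matrix.smul_apply]
    rw [this]
    rw [Matrix.mul_add, Matrix.add_mul]
    congr 1
    rw [Matrix.mul_smul, Matrix.smul_mul, Matrix.mul_one]
  rw [key]
  refine Matrix.PosSemidef.mul_mul_conjTranspose_same ?_ _
  refine Matrix.PosSemidef.diagonal ?_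
  intro i
  show (0:ℂ) ≤ ((hH.eigenvalues i + c : ℝ) : ℂ)
  have h1 : -(hH.eigenvalues i) ≤ |hH.eigenvalues i| := neg_le_abs _
  have h2 : |hH.eigenvalues i| ≤ c := by
    rw [hc]
    exact Finset.single_le_sum (f := fun j => |hH.eigenvalues j|) (fun j _ => abs_nonneg _) (Finset.mem_univ i)
  have h0 : (0:ℝ) ≤ hH.eigenvalues i + c := by linarith
  exact_mod_cast h0

lemma trace_mul_W (g : Matrix m m ℂ →ₗ[ℝ] ℝ) (c : ℝ) (A : Matrix m m ℂ)
    (hA : A.IsHermitian) (htr : A.trace = 1) :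
    (A * (hermPart (witnessY g) + c • (1 : Matrix m m ℂ))).trace.re = g A + c := by
  rw [Matrix.mul_add, Matrix.trace_add, Complex.add_re,
    trace_mul_hermPart_re A _ hA, trace_mul_witnessY]
  congr 1
  rw [Matrix.mul_smul, Matrix.mul_one, Matrix.trace_smul, htr]
  simp [Complex.real_smul]


lemma ptrace_add (X : Finset ι) (A B : GlobalMat d) :
    ptrace d X (A + B) = ptrace d X A + ptrace d X B :=
  (ptraceL d X).map_add A B

lemma ptrace_smul (X : Finset ι) (r : ℝ) (A : GlobalMat d) :
    ptrace d X (r • A) = r • ptrace d X A :=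
  (ptraceL d X).map_smul r A

variable (T : Finset ι) (F : Set (SubMat d T)) (Λ : Finset (Finset ι))

/-- Global states whose partial trace on `T` is free. -/
def DSet : Set (GlobalMat d) := {ρ | IsState ρ ∧ ptrace d T ρ ∈ F}

lemma isClosed_DSet (hFc : IsCompact F) : IsClosed (DSet d T F) := by
  have he : DSet d T F
      = ({ρ : GlobalMat d | ρ.PosSemidef} ∩ {ρ | ρ.trace = 1}) ∩ (ptrace d T ⁻¹' F) := by
    ext ρ
    simp [DSet, IsState, and_assoc]
  rw [he]
  exact (isClosed_posSemidef.inter (isClosed_eq continuous_trace continuous_const)).inter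
    (hFc.isClosed.preimage (ptrace_continuous d T))

lemma isCompact_DSet (hFc : IsCompact F) : IsCompact (DSet d T F) := by
  refine IsCompact.of_isClosed_subset (isCompact_closedBall (0 : GlobalMat d) 1)
    (isClosed_DSet d T F hFc) ?_
  intro ρ hρ
  rw [Metric.mem_closedBall, dist_zero_right]
  refine (Matrix.norm_le_iff zero_le_one).mpr fun a b => ?_
  simpa using entry_abs_le hρ.1.1 hρ.1.2 a b

lemma convex_DSet (hFconv : Convex ℝ F) : Convex ℝ (DSet d T F) := by
  rintro ρ ⟨⟨hP, htr⟩, hFmem⟩ ρ' ⟨⟨hP', htr'⟩, hFmem'⟩ p q hp hq hpq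
  obtain ⟨hH, hQ⟩ := Matrix.posSemidef_iff_dotProduct_mulVec.mp hP
  obtain ⟨hH', hQ'⟩ := Matrix.posSemidef_iff_dotProduct_mulVec.mp hP'
  refine ⟨⟨Matrix.PosSemidef.of_dotProduct_mulVec_nonneg ?_ ?_, ?_⟩, ?_⟩
  · show (p • ρ + q • ρ')ᴴ = _
    rw [Matrix.conjTranspose_add, Matrix.conjTranspose_smul, Matrix.conjTranspose_smul,
      star_trivial, star_trivial, hH, hH']
  · intro x
    have e : star x ⬝ᵥ (p • ρ + q • ρ') *ᵥ x
        = p • (star x ⬝ᵥ ρ *ᵥ x) + q • (star x ⬝ᵥ ρ' *ᵥ x) := by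
      rw [Matrix.add_mulVec, Matrix.smul_mulVec, Matrix.smul_mulVec,
        dotProduct_add, dotProduct_smul, dotProduct_smul]
    rw [e]
    have h1 := hQ x
    have h2 := hQ' x
    rw [Complex.le_def] at h1 h2 ⊢
    constructor
    · simp only [Complex.add_re, Complex.zero_re, Complex.smul_re]
      have := mul_nonneg hp h1.1
      have := mul_nonneg hq h2.1
      simp only [smul_eq_mul]
      linarith
    · simp only [Complex.add_im, Complex.zero_im, Complex.smul_im, ← h1.2, ← h2.2]
      simp
  · rw [Matrix.trace_add, Matrix.trace_smul, Matrix.trace_smul, htr, htr']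
    simp [Complex.real_smul]
    exact_mod_cast congrArg (fun r : ℝ => (r : ℂ)) hpq
  · rw [ptrace_add, ptrace_smul, ptrace_smul]
    exact hFconv hFmem hFmem' hp hq hpq

/-- The marginal map on `Λ` as a linear map. -/
noncomputable def margL : GlobalMat d →ₗ[ℝ] (∀ X : Λ, SubMat d X.1) :=
  LinearMap.pi fun X => ptraceL d X.1

lemma CRT_eq_image : CRT d Λ T F = (⇑(margL d Λ)) '' (DSet d T F) := by
  ext σ
  constructor
  · rintro ⟨ρ, h1, h2, h3⟩
    exact ⟨ρ, ⟨h1, h3⟩, funext h2⟩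
  · rintro ⟨ρ, ⟨h1, h3⟩, rfl⟩
    exact ⟨ρ, h1, fun X => rfl, h3⟩

lemma isCompact_CRT (hFc : IsCompact F) : IsCompact (CRT d Λ T F) := by
  rw [CRT_eq_image]
  exact (isCompact_DSet d T F hFc).image (margL d Λ).continuous_of_finiteDimensional

lemma convex_CRT (hFconv : Convex ℝ F) : Convex ℝ (CRT d Λ T F) := by
  rw [CRT_eq_image]
  exact (convex_DSet d T F hFconv).is_linear_image (margL d Λ).isLinear

theorem rFree_main
    (hF : ∀ η ∈ F, IsState η)
    (hA1 : Convex ℝ F ∧ IsCompact F)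
    (hA2 : ∃ ρ : GlobalMat d, IsState ρ ∧ ptrace d T ρ ∈ F ∧
      ∀ X : Λ, (ptrace d X.1 ρ).PosDef)
    (σ : ∀ X : Λ, SubMat d X.1) (hσ : ∀ X : Λ, IsState (σ X)) :
    σ ∉ CRT d Λ T F ↔
      ∃ W : ∀ X : Λ, SubMat d X.1, (∀ X : Λ, (W X).PosSemidef) ∧
        sSup {r : ℝ | ∃ τ ∈ CRT d Λ T F, r = ∑ X : Λ, (τ X * W X).trace.re}
          < ∑ X : Λ, (σ X * W X).trace.re := by
  classical
  obtain ⟨hFconv, hFc⟩ := hA1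
  have hCc : IsCompact (CRT d Λ T F) := isCompact_CRT d T F Λ hFc
  have hmem : ∀ τ ∈ CRT d Λ T F, (∀ X : Λ, (τ X).IsHermitian) ∧ (∀ X : Λ, (τ X).trace = 1) := by
    rintro τ ⟨ρ, hρ, hτ, -⟩
    constructor
    · intro X
      rw [← hτ X]
      exact ptrace_isHermitian d X.1 hρ.1.1
    · intro X
      rw [← hτ X, trace_ptrace]
      exact hρ.2
  constructor
  · intro hσnot
    have hCconv := convex_CRT d T F Λ hFconv
    haveI : LocallyConvexSpace ℝ (∀ X : Λ, SubMat d X.1) := NormedSpace.toLocallyConvexSpace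
    obtain ⟨f, u, hfu, huσ⟩ := geometric_hahn_banach_closed_point hCconv hCc.isClosed hσnot
    set g : ∀ X : Λ, SubMat d X.1 →ₗ[ℝ] ℝ := fun X =>
      f.toLinearMap.comp (LinearMap.single ℝ (fun X : Λ => SubMat d X.1) X) with hg
    have hshift : ∀ X : Λ, ∃ c : ℝ, 0 ≤ c
        ∧ (hermPart (witnessY (g X)) + c • (1 : SubMat d X.1)).PosSemidef :=
      fun X => exists_shift_posSemidef _ (hermPart_isHermitian _)
    choose c hc0 hcPSD using hshift
    set W : ∀ X : Λ, SubMat d X.1 := fun X => hermPart (witnessY (g X)) + c X • 1 with hWdef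
    refine ⟨W, fun X => hcPSD X, ?_⟩
    have hval : ∀ τ : ∀ X : Λ, SubMat d X.1, (∀ X, (τ X).IsHermitian) →
        (∀ X, (τ X).trace = 1) →
        ∑ X : Λ, ((τ X) * W X).trace.re = f τ + ∑ X : Λ, c X := by
      intro τ hHτ htrτ
      have h1 : ∀ X : Λ, ((τ X) * W X).trace.re = g X (τ X) + c X := fun X =>
        trace_mul_W (g X) (c X) (τ X) (hHτ X) (htrτ X)
      rw [Finset.sum_congr rfl (fun X _ => h1 X), Finset.sum_add_distrib]
      congr 1
      have hτeq : τ = ∑ X : Λ, Pi.single X (τ X) := (Finset.univ_sum_single τ).symm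
      conv_rhs => rw [hτeq]
      rw [map_sum]
      rfl
    obtain ⟨ρ₀, hρ₀st, hρ₀F, -⟩ := hA2
    have hne : (CRT d Λ T F).Nonempty :=
      ⟨fun X => ptrace d X.1 ρ₀, ρ₀, hρ₀st, fun X => rfl, hρ₀F⟩
    have hSne : {r : ℝ | ∃ τ ∈ CRT d Λ T F, r = ∑ X : Λ, (τ X * W X).trace.re}.Nonempty := by
      obtain ⟨τ, hτ⟩ := hne
      exact ⟨_, τ, hτ, rfl⟩
    have hub : ∀ r ∈ {r : ℝ | ∃ τ ∈ CRT d Λ T F, r = ∑ X : Λ, (τ X * W X).trace.re},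
        r ≤ u + ∑ X : Λ, c X := by
      rintro r ⟨τ, hτC, rfl⟩
      obtain ⟨hHτ, htrτ⟩ := hmem τ hτC
      rw [hval τ hHτ htrτ]
      have := hfu τ hτC
      linarith
    have hσval : ∑ X : Λ, (σ X * W X).trace.re = f σ + ∑ X : Λ, c X :=
      hval σ (fun X => (hσ X).1.isHermitian) (fun X => (hσ X).2)
    calc sSup {r : ℝ | ∃ τ ∈ CRT d Λ T F, r = ∑ X : Λ, (τ X * W X).trace.re}
        ≤ u + ∑ X : Λ, c X := csSup_le hSne hub
      _ < f σ + ∑ X : Λ, c X := by linarith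
      _ = ∑ X : Λ, (σ X * W X).trace.re := hσval.symm
  · rintro ⟨W, hWpsd, hlt⟩ hσmem
    have hr0 : (∑ X : Λ, (σ X * W X).trace.re)
        ∈ {r : ℝ | ∃ τ ∈ CRT d Λ T F, r = ∑ X : Λ, (τ X * W X).trace.re} := ⟨σ, hσmem, rfl⟩
    have hGcont : Continuous fun τ : ∀ X : Λ, SubMat d X.1 =>
        ∑ X : Λ, (τ X * W X).trace.re := by
      refine continuous_finset_sum _ fun X _ => ?_
      refine Complex.continuous_re.comp ?_
      show Continuous fun τ : ∀ X : Λ, SubMat d X.1 =>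
        ∑ i, ∑ k, (τ X) i k * (W X) k i
      refine continuous_finset_sum _ fun i _ => continuous_finset_sum _ fun k _ => ?_
      exact ((by fun_prop : Continuous fun τ : ∀ X : Λ, SubMat d X.1 => (τ X) i k).mul continuous_const)
    have hbdd : BddAbove {r : ℝ | ∃ τ ∈ CRT d Λ T F, r = ∑ X : Λ, (τ X * W X).trace.re} := by
      have he : {r : ℝ | ∃ τ ∈ CRT d Λ T F, r = ∑ X : Λ, (τ X * W X).trace.re}
          = (fun τ : ∀ X : Λ, SubMat d X.1 => ∑ X : Λ, (τ X * W X).trace.re) '' (CRT d Λ T F) := by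
        ext r
        constructor
        · rintro ⟨τ, hτ, rfl⟩
          exact ⟨τ, hτ, rfl⟩
        · rintro ⟨τ, hτ, rfl⟩
          exact ⟨τ, hτ, rfl⟩
      rw [he]
      exact (hCc.image hGcont).bddAbove
    exact absurd hlt (not_lt.mpr (le_csSup hbdd hr0))

end RMP



namespace RMP

/-- Theorem 1 of the paper, "R-Free Incompatibility Witness".
Under Assumptions (A1) and (A2), a family of marginal states `σ_Λ` is `R`-free
incompatible iff there is a family of positive semidefinite witnesses `W_Λ` whose value
on `σ_Λ` strictly exceeds its supremum over `C_{R|T,Λ}`. -/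
theorem rFree_incompatible_iff_exists_witness
    {ι : Type} [Fintype ι] [DecidableEq ι]
    (d : ι → Type) [∀ i, Fintype (d i)] [∀ i, DecidableEq (d i)] [∀ i, Nonempty (d i)]
    (Λ : Finset (Finset ι)) (T : Finset ι) (F : Set (SubMat d T))
    (hF : ∀ η ∈ F, IsState η)
    (hA1 : Convex ℝ F ∧ IsCompact F)
    (hA2 : ∃ ρ : GlobalMat d, IsState ρ ∧ ptrace d T ρ ∈ F ∧
      ∀ X : Λ, (ptrace d X.1 ρ).PosDef)
    (σ : ∀ X : Λ, SubMat d X.1) (hσ : ∀ X : Λ, IsState (σ X)) :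
    σ ∉ CRT d Λ T F ↔
      ∃ W : ∀ X : Λ, SubMat d X.1, (∀ X : Λ, (W X).PosSemidef) ∧
        sSup {r : ℝ | ∃ τ ∈ CRT d Λ T F, r = ∑ X : Λ, (τ X * W X).trace.re}
          < ∑ X : Λ, (σ X * W X).trace.re := by
  exact rFree_main d T F Λ hF hA1 hA2 σ hσ

end RMP
end

section
/- Suppose every channel in O_R maps every state in F to a state in F. Then for every family τ_Λ ∈ C_{R|T,Λ} and every family of channels ℰ_Λ ∈ 𝔒_{R|T,Λ}, the family ℰ_Λ(τ_Λ) belongs to C_{R|T,Λ}. -/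
open scoped ComplexOrder ENNReal Kronecker Matrix

namespace RMP

/-- The Choi matrix of a linear map between matrix spaces. -/
noncomputable def choi {m n : Type} [Fintype m] [DecidableEq m] [Fintype n]
    (Φ : Matrix m m ℂ →ₗ[ℂ] Matrix n n ℂ) : Matrix (n × m) (n × m) ℂ :=
  ∑ a : m, ∑ b : m, (Φ (Matrix.single a b 1)) ⊗ₖ (Matrix.single a b 1)

/-- A quantum channel: completely positive (positive semidefinite Choi matrix) and
trace preserving. -/
def IsChannel {m n : Type} [Fintype m] [DecidableEq m] [Fintype n]
    (Φ : Matrix m m ℂ →ₗ[ℂ] Matrix n n ℂ) : Prop :=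
  (choi Φ).PosSemidef ∧ ∀ M : Matrix m m ℂ, (Φ M).trace = M.trace

/-- `ℰX` is the marginal channel of the global channel `ℰS` on the subsystem `X`. -/
def IsMarginalChannel {ι : Type} [Fintype ι] [DecidableEq ι]
    (d : ι → Type) [∀ i, Fintype (d i)] [∀ i, DecidableEq (d i)]
    (ℰS : GlobalMat d →ₗ[ℂ] GlobalMat d) (X : Finset ι)
    (ℰX : SubMat d X →ₗ[ℂ] SubMat d X) : Prop :=
  IsChannel ℰX ∧ ∀ ρ : GlobalMat d, ptrace d X (ℰS ρ) = ℰX (ptrace d X ρ)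

/-- The set `𝔒_{R|T,Λ}` of free operations induced by the free channels `O_R` on `T`. -/
def freeOps {ι : Type} [Fintype ι] [DecidableEq ι]
    (d : ι → Type) [∀ i, Fintype (d i)] [∀ i, DecidableEq (d i)]
    (Λ : Finset (Finset ι)) (T : Finset ι)
    (OR : Set (SubMat d T →ₗ[ℂ] SubMat d T)) :
    Set (∀ X : Λ, SubMat d X.1 →ₗ[ℂ] SubMat d X.1) :=
  {ℰ | (∀ X : Λ, IsChannel (ℰ X)) ∧
    ∃ ℰS : GlobalMat d →ₗ[ℂ] GlobalMat d, IsChannel ℰS ∧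
      (∀ X : Λ, IsMarginalChannel d ℰS X.1 (ℰ X)) ∧
      ∃ ℰT ∈ OR, IsMarginalChannel d ℰS T ℰT}

/-- The `R`-free incompatibility robustness `R_{R|T}(σ_Λ)`. -/
noncomputable def robustness {ι : Type} [Fintype ι] [DecidableEq ι]
    (d : ι → Type) [∀ i, Fintype (d i)] [∀ i, DecidableEq (d i)] [∀ i, Nonempty (d i)]
    (Λ : Finset (Finset ι)) (T : Finset ι) (F : Set (SubMat d T))
    (σ : ∀ X : Λ, SubMat d X.1) : ℝ≥0∞ :=
  sInf {r | ∃ p : ℝ, 0 < p ∧ p ≤ 1 ∧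
    (∃ τ : ∀ X : Λ, SubMat d X.1, (∀ X : Λ, IsState (τ X)) ∧
      (fun X : Λ => p • σ X + (1 - p) • τ X) ∈ CRT d Λ T F) ∧
    r = ENNReal.ofReal (-Real.logb 2 p)}

end RMP

namespace RMP

lemma choi_apply {m n : Type} [Fintype m] [DecidableEq m] [Fintype n]
    (Φ : Matrix m m ℂ →ₗ[ℂ] Matrix n n ℂ) (x y : n) (a b : m) :
    choi Φ (x, a) (y, b) = Φ (Matrix.single a b 1) x y := by
  simp only [choi, Matrix.sum_apply, Matrix.kroneckerMap_apply, Matrix.single_apply,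
    Matrix.of_apply]
  rw [Finset.sum_eq_single a, Finset.sum_eq_single b] <;>
    aesop

lemma map_apply_eq {m n : Type} [Fintype m] [DecidableEq m] [Fintype n]
    (Φ : Matrix m m ℂ →ₗ[ℂ] Matrix n n ℂ) (M : Matrix m m ℂ) (x y : n) :
    Φ M x y = ∑ a : m, ∑ b : m, M a b * Φ (Matrix.single a b 1) x y := by
  conv_lhs => rw [Matrix.matrix_eq_sum_single M]
  simp only [map_sum, Matrix.sum_apply]
  refine Finset.sum_congr rfl fun a _ => Finset.sum_congr rfl fun b _ => ?_
  have : Matrix.single a b (M a b) = M a b • Matrix.single a b 1 := by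
    simp
  rw [this, map_smul, Matrix.smul_apply, smul_eq_mul]

lemma cp_posSemidef {m n : Type} [Fintype m] [DecidableEq m] [Fintype n]
    (Φ : Matrix m m ℂ →ₗ[ℂ] Matrix n n ℂ) (hΦ : (choi Φ).PosSemidef)
    {ρ : Matrix m m ℂ} (hρ : ρ.PosSemidef) : (Φ ρ).PosSemidef := by
  open scoped MatrixOrder in
  obtain ⟨B, hB⟩ := CStarAlgebra.nonneg_iff_eq_star_mul_self.mp hρ.nonneg
  have hρab : ∀ a b, ρ a b = ∑ k : m, star (B k a) * B k b := by
    intro a b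
    rw [hB]
    simp [Matrix.mul_apply, Matrix.conjTranspose_apply, Matrix.star_apply]
  have hchoi : ∀ x y a b, Φ (Matrix.single a b 1) x y
      = star (Φ (Matrix.single b a 1) y x) := by
    intro x y a b
    have := congrFun (congrFun hΦ.1 (x, a)) (y, b)
    rw [Matrix.conjTranspose_apply] at this
    rw [choi_apply, choi_apply] at this
    rw [← this]
  rw [Matrix.posSemidef_iff_dotProduct_mulVec]
  constructor
  · show (Φ ρ)ᴴ = Φ ρ
    ext x y
    rw [Matrix.conjTranspose_apply, map_apply_eq, map_apply_eq, Finset.sum_comm]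
    rw [star_sum]
    refine Finset.sum_congr rfl fun a _ => ?_
    rw [star_sum]
    refine Finset.sum_congr rfl fun b _ => ?_
    rw [star_mul', hρ.1.apply, hchoi x y a b]
  · intro v
    set f : m → n → n → m → m → ℂ := fun k x y a b =>
      star (v x) * (star (B k a) * (B k b * (Φ (Matrix.single a b 1) x y * v y)))
      with hf
    have key : star v ⬝ᵥ (Φ ρ).mulVec v
        = ∑ k : m, star (fun p : n × m => v p.1 * B k p.2) ⬝ᵥ
            (choi Φ).mulVec (fun p : n × m => v p.1 * B k p.2) := by
      calc star v ⬝ᵥ (Φ ρ).mulVec v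
          = ∑ x : n, ∑ y : n, ∑ a : m, ∑ b : m, ∑ k : m, f k x y a b := by
            simp only [dotProduct, Matrix.mulVec, Pi.star_apply, map_apply_eq Φ ρ,
              hρab, Finset.mul_sum, Finset.sum_mul]
            refine Finset.sum_congr rfl fun x _ => Finset.sum_congr rfl fun y _ =>
              Finset.sum_congr rfl fun a _ => Finset.sum_congr rfl fun b _ =>
              Finset.sum_congr rfl fun k _ => ?_
            simp only [hf]; ring
        _ = ∑ x : n, ∑ y : n, ∑ a : m, ∑ k : m, ∑ b : m, f k x y a b :=
            Finset.sum_congr rfl fun x _ => Finset.sum_congr rfl fun y _ =>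
              Finset.sum_congr rfl fun a _ => Finset.sum_comm
        _ = ∑ x : n, ∑ y : n, ∑ k : m, ∑ a : m, ∑ b : m, f k x y a b :=
            Finset.sum_congr rfl fun x _ => Finset.sum_congr rfl fun y _ => Finset.sum_comm
        _ = ∑ x : n, ∑ k : m, ∑ y : n, ∑ a : m, ∑ b : m, f k x y a b :=
            Finset.sum_congr rfl fun x _ => Finset.sum_comm
        _ = ∑ k : m, ∑ x : n, ∑ y : n, ∑ a : m, ∑ b : m, f k x y a b := Finset.sum_comm
        _ = ∑ k : m, ∑ x : n, ∑ a : m, ∑ y : n, ∑ b : m, f k x y a b :=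
            Finset.sum_congr rfl fun k _ => Finset.sum_congr rfl fun x _ => Finset.sum_comm
        _ = ∑ k : m, star (fun p : n × m => v p.1 * B k p.2) ⬝ᵥ
            (choi Φ).mulVec (fun p : n × m => v p.1 * B k p.2) := by
            refine Finset.sum_congr rfl fun k _ => ?_
            simp only [dotProduct, Matrix.mulVec, Pi.star_apply, Fintype.sum_prod_type,
              choi_apply, Finset.mul_sum, Finset.sum_mul]
            refine Finset.sum_congr rfl fun x _ => Finset.sum_congr rfl fun a _ =>
              Finset.sum_congr rfl fun y _ => Finset.sum_congr rfl fun b _ => ?_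
            simp only [hf, star_mul']; ring
    rw [key]
    exact Finset.sum_nonneg fun k _ => hΦ.dotProduct_mulVec_nonneg _

lemma channel_isState {m n : Type} [Fintype m] [DecidableEq m] [Fintype n]
    {Φ : Matrix m m ℂ →ₗ[ℂ] Matrix n n ℂ} (hΦ : IsChannel Φ)
    {ρ : Matrix m m ℂ} (hρ : IsState ρ) : IsState (Φ ρ) :=
  ⟨cp_posSemidef Φ hΦ.1 hρ.1, by rw [hΦ.2]; exact hρ.2⟩

/-- Eq. (16) of the paper. If every free channel in `O_R` maps free
states to free states, then the free operations `𝔒_{R|T,Λ}` preserve the set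
`C_{R|T,Λ}` of `R`-free compatible families. -/
theorem freeOps_preserve_CRT
    {ι : Type} [Fintype ι] [DecidableEq ι]
    (d : ι → Type) [∀ i, Fintype (d i)] [∀ i, DecidableEq (d i)] [∀ i, Nonempty (d i)]
    (Λ : Finset (Finset ι)) (T : Finset ι) (F : Set (SubMat d T))
    (hF : ∀ η ∈ F, IsState η)
    (OR : Set (SubMat d T →ₗ[ℂ] SubMat d T))
    (hOR : ∀ Φ ∈ OR, IsChannel Φ)
    (hpres : ∀ Φ ∈ OR, ∀ η ∈ F, Φ η ∈ F) :
    ∀ τ ∈ CRT d Λ T F, ∀ ℰ ∈ freeOps d Λ T OR,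
      (fun X : Λ => ℰ X (τ X)) ∈ CRT d Λ T F := by
  intro τ hτ ℰ hℰ
  obtain ⟨ρ, hρ, hmarg, hT⟩ := hτ
  obtain ⟨hch, ℰS, hℰS, hmargch, ℰT, hℰTmem, hℰT⟩ := hℰ
  refine ⟨ℰS ρ, channel_isState hℰS hρ, fun X => ?_, ?_⟩
  · rw [(hmargch X).2, hmarg X]
  · rw [hℰT.2]
    exact hpres ℰT hℰTmem _ hT

end RMP
end

section
/- Assume some X₀ ∈ Λ satisfies T ⊆ X₀. Then the following are equivalent: (1) F is convex; (2) C_{R|T,Λ} is convex (as a subset of the product space of families of matrices); (3) S_{R|T} is convex; (4) the cone 𝒞_{R|T} is convex. -/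
/-!
Tensoring a state on `T` with any state on the complement gives a global state with that
marginal, so `F` is the image of `S_{R|T}` under the partial trace, while `C_{R|T,Λ}` is the
image of `S_{R|T}` under the linear map to the family of marginals. Since `T ⊆ X₀ ∈ Λ`, the
marginal on `T` is a function of the marginal on `X₀`, so `F` is also the partial-trace image of
the global states whose family of marginals lies in `C_{R|T,Λ}`. Finally `S_{R|T}` is the
trace-one slice of `𝒞_{R|T}`, and the cone over a convex set is convex. All four equivalences
are therefore instances of convexity being preserved by linear images, linear preimages and
intersections.
-/

open scoped ComplexOrder ENNReal Kronecker Matrix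

namespace RMP

/-- The set `S_{R|T}` of global states whose marginal on `T` is free. -/
def SRT {ι : Type} [Fintype ι] [DecidableEq ι]
    (d : ι → Type) [∀ i, Fintype (d i)] [∀ i, DecidableEq (d i)]
    (T : Finset ι) (F : Set (SubMat d T)) : Set (GlobalMat d) :=
  {ρ | IsState ρ ∧ ptrace d T ρ ∈ F}

end RMP

theorem Convex.setOf_nonneg_smul {𝕜 E : Type*} [Field 𝕜] [LinearOrder 𝕜] [IsStrictOrderedRing 𝕜]
    [AddCommGroup E] [Module 𝕜 E] {s : Set E} (hs : Convex 𝕜 s) :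
    Convex 𝕜 {x | ∃ α : 𝕜, 0 ≤ α ∧ ∃ y ∈ s, x = α • y} := by
  rintro _ ⟨α, hα, y, hy, rfl⟩ _ ⟨β, hβ, z, hz, rfl⟩ a b ha hb -
  rcases (add_nonneg (mul_nonneg ha hα) (mul_nonneg hb hβ)).eq_or_lt with hγ | hγ
  · obtain ⟨hay, hbz⟩ :=
      (add_eq_zero_iff_of_nonneg (mul_nonneg ha hα) (mul_nonneg hb hβ)).mp hγ.symm
    exact ⟨0, le_rfl, y, hy, by simp [smul_smul, hay, hbz]⟩
  · refine ⟨a * α + b * β, hγ.le, _, convex_iff_div.mp hs hy hz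
      (mul_nonneg ha hα) (mul_nonneg hb hβ) hγ, ?_⟩
    rw [smul_add, smul_smul, smul_smul, smul_smul, smul_smul, mul_div_cancel₀ _ hγ.ne',
      mul_div_cancel₀ _ hγ.ne']

namespace Matrix

theorem convex_setOf_posSemidef {m : Type*} :
    Convex ℝ {ρ : Matrix m m ℂ | ρ.PosSemidef} :=
  fun _ hρ _ hσ _ _ ha hb _ => (hρ.smul ha).add (hσ.smul hb)

theorem convex_setOf_trace_eq {m : Type*} [Fintype m] (z : ℂ) :
    Convex ℝ {ρ : Matrix m m ℂ | ρ.trace = z} :=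
  convex_hyperplane (traceLinearMap m ℝ ℂ).isLinear z

theorem trace_submatrix_equiv {m n R : Type*} [Fintype m] [Fintype n] [AddCommMonoid R]
    (A : Matrix n n R) (e : m ≃ n) : (A.submatrix e e).trace = A.trace :=
  e.sum_comp fun i => A i i

end Matrix

namespace RMP

section States

variable {m : Type} [Fintype m]

theorem convex_setOf_isState : Convex ℝ {ρ : Matrix m m ℂ | IsState ρ} :=
  Matrix.convex_setOf_posSemidef.inter (Matrix.convex_setOf_trace_eq 1)

theorem exists_isState [Nonempty m] : ∃ ρ : Matrix m m ℂ, IsState ρ := by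
  classical
  obtain ⟨i⟩ := ‹Nonempty m›
  refine ⟨Matrix.diagonal (Pi.single i 1), ?_, ?_⟩
  · exact Matrix.PosSemidef.diagonal fun j => by
      rcases eq_or_ne j i with rfl | h <;> simp [*]
  · simp [Matrix.trace_diagonal]

theorem IsState.kronecker {n : Type} [Fintype n] {ρ : Matrix m m ℂ} {σ : Matrix n n ℂ}
    (hρ : IsState ρ) (hσ : IsState σ) : IsState (ρ ⊗ₖ σ) :=
  ⟨hρ.1.kronecker hσ.1, by rw [Matrix.trace_kronecker, hρ.2, hσ.2, mul_one]⟩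

end States

variable {ι : Type} [Fintype ι] [DecidableEq ι] (d : ι → Type)

section Assignments

def splitEquiv (X : Finset ι) :
    (∀ i, d i) ≃ (∀ i : X, d i.1) × (∀ i : (Xᶜ : Finset ι), d i.1) where
  toFun x := (fun i => x i.1, fun i => x i.1)
  invFun p := combine d X p.1 p.2
  left_inv x := by
    funext i
    by_cases h : i ∈ X <;> simp [combine, h]
  right_inv p := by
    refine Prod.ext (funext fun i => ?_) (funext fun i => ?_)
    · simp [combine, i.2]
    · simp [combine, Finset.mem_compl.mp i.2]

@[simp]
theorem splitEquiv_apply_combine (X : Finset ι) (a : ∀ i : X, d i.1)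
    (c : ∀ i : (Xᶜ : Finset ι), d i.1) : splitEquiv d X (combine d X a c) = (a, c) :=
  (splitEquiv d X).apply_symm_apply (a, c)

variable {T X₀ : Finset ι}

def complSplitEquiv (hTX : T ⊆ X₀) :
    (∀ i : (Tᶜ : Finset ι), d i.1) ≃
      (∀ i : (X₀ \ T : Finset ι), d i.1) × (∀ i : (X₀ᶜ : Finset ι), d i.1) where
  toFun c := (fun i => c ⟨i.1, Finset.mem_compl.mpr (Finset.mem_sdiff.mp i.2).2⟩,
    fun i => c ⟨i.1, Finset.mem_compl.mpr fun h => Finset.mem_compl.mp i.2 (hTX h)⟩)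
  invFun p i :=
    if h : i.1 ∈ X₀ then p.1 ⟨i.1, Finset.mem_sdiff.mpr ⟨h, Finset.mem_compl.mp i.2⟩⟩
    else p.2 ⟨i.1, Finset.mem_compl.mpr h⟩
  left_inv c := by
    funext i
    by_cases h : i.1 ∈ X₀ <;> simp [h]
  right_inv p := by
    refine Prod.ext (funext fun i => ?_) (funext fun i => ?_)
    · simp [(Finset.mem_sdiff.mp i.2).1]
    · simp [Finset.mem_compl.mp i.2]

def merge (a : ∀ i : T, d i.1) (e : ∀ i : (X₀ \ T : Finset ι), d i.1) : ∀ i : X₀, d i.1 :=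
  fun i => if h : i.1 ∈ T then a ⟨i.1, h⟩ else e ⟨i.1, Finset.mem_sdiff.mpr ⟨i.2, h⟩⟩

theorem combine_complSplitEquiv_symm (hTX : T ⊆ X₀) (a : ∀ i : T, d i.1)
    (e : ∀ i : (X₀ \ T : Finset ι), d i.1) (f : ∀ i : (X₀ᶜ : Finset ι), d i.1) :
    combine d T a ((complSplitEquiv d hTX).symm (e, f)) = combine d X₀ (merge d a e) f := by
  funext i
  by_cases hX : i ∈ X₀
  · by_cases hT : i ∈ T <;> simp [combine, merge, complSplitEquiv, hT, hX]
  · have hT : i ∉ T := fun h => hX (hTX h)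
    simp [combine, complSplitEquiv, hT, hX]

end Assignments

variable [∀ i, Fintype (d i)]

section PartialTrace

noncomputable def ptraceₗ (X : Finset ι) : GlobalMat d →ₗ[ℂ] SubMat d X where
  toFun := ptrace d X
  map_add' ρ σ := by ext; simp [ptrace, Finset.sum_add_distrib]
  map_smul' z ρ := by ext; simp [ptrace, Finset.mul_sum]

@[simp]
theorem ptraceₗ_apply (X : Finset ι) (ρ : GlobalMat d) : ptraceₗ d X ρ = ptrace d X ρ := rfl

noncomputable def marginalsₗ (Λ : Finset (Finset ι)) : GlobalMat d →ₗ[ℂ] ∀ X : Λ, SubMat d X.1 :=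
  LinearMap.pi fun X => ptraceₗ d X.1

@[simp]
theorem marginalsₗ_apply (Λ : Finset (Finset ι)) (ρ : GlobalMat d) (X : Λ) :
    marginalsₗ d Λ ρ X = ptrace d X.1 ρ := rfl

theorem ptrace_submatrix_kronecker (X : Finset ι) (η : SubMat d X)
    (σ : Matrix (∀ i : (Xᶜ : Finset ι), d i.1) (∀ i : (Xᶜ : Finset ι), d i.1) ℂ) :
    ptrace d X ((η ⊗ₖ σ).submatrix (splitEquiv d X) (splitEquiv d X)) = σ.trace • η := by
  ext a b
  simp [ptrace, Matrix.trace, Finset.mul_sum, mul_comm]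

theorem exists_isState_ptrace_eq [∀ i, Nonempty (d i)] {X : Finset ι} {η : SubMat d X}
    (hη : IsState η) : ∃ ρ : GlobalMat d, IsState ρ ∧ ptrace d X ρ = η := by
  obtain ⟨σ, hσ⟩ := exists_isState (m := ∀ i : (Xᶜ : Finset ι), d i.1)
  have hησ := hη.kronecker hσ
  refine ⟨(η ⊗ₖ σ).submatrix (splitEquiv d X) (splitEquiv d X),
    ⟨hησ.1.submatrix _, by rw [Matrix.trace_submatrix_equiv, hησ.2]⟩, ?_⟩
  rw [ptrace_submatrix_kronecker, hσ.2, one_smul]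

variable {T X₀ : Finset ι}

theorem ptrace_apply_eq_sum_ptrace (hTX : T ⊆ X₀) (ρ : GlobalMat d) (a b : ∀ i : T, d i.1) :
    ptrace d T ρ a b =
      ∑ e : ∀ i : (X₀ \ T : Finset ι), d i.1, ptrace d X₀ ρ (merge d a e) (merge d b e) := by
  simp only [ptrace, Matrix.of_apply]
  rw [← (complSplitEquiv d hTX).symm.sum_comp, Fintype.sum_prod_type]
  simp only [combine_complSplitEquiv_symm d hTX]

theorem ptrace_congr_of_subset (hTX : T ⊆ X₀) {ρ σ : GlobalMat d}
    (h : ptrace d X₀ ρ = ptrace d X₀ σ) : ptrace d T ρ = ptrace d T σ := by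
  ext a b
  rw [ptrace_apply_eq_sum_ptrace d hTX, ptrace_apply_eq_sum_ptrace d hTX, h]

end PartialTrace

section FreeSets

variable [∀ i, DecidableEq (d i)] (Λ : Finset (Finset ι)) (T : Finset ι) (F : Set (SubMat d T))

theorem CRT_eq_image_SRT : CRT d Λ T F = marginalsₗ d Λ '' SRT d T F := by
  ext σ
  simp only [CRT, SRT, Set.mem_image, Set.mem_ofPred_eq, funext_iff, marginalsₗ_apply]
  grind

theorem image_ptrace_SRT [∀ i, Nonempty (d i)] (hF : ∀ η ∈ F, IsState η) :
    ptrace d T '' SRT d T F = F := by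
  refine subset_antisymm (Set.image_subset_iff.mpr fun ρ hρ => hρ.2) fun η hη => ?_
  obtain ⟨ρ, hρ, rfl⟩ := exists_isState_ptrace_eq d (hF η hη)
  exact ⟨ρ, ⟨hρ, hη⟩, rfl⟩

theorem image_ptrace_preimage_CRT [∀ i, Nonempty (d i)] (hF : ∀ η ∈ F, IsState η)
    {X₀ : Finset ι} (hX₀ : X₀ ∈ Λ) (hTX : T ⊆ X₀) :
    ptrace d T '' ({ρ | IsState ρ} ∩ marginalsₗ d Λ ⁻¹' CRT d Λ T F) = F := by
  refine subset_antisymm ?_ ?_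
  · rintro _ ⟨ρ, ⟨-, ρ', -, hρ', hρ'F⟩, rfl⟩
    rwa [ptrace_congr_of_subset d hTX (hρ' ⟨X₀, hX₀⟩)] at hρ'F
  · calc F = ptrace d T '' SRT d T F := (image_ptrace_SRT d T F hF).symm
      _ ⊆ ptrace d T '' ({ρ | IsState ρ} ∩ marginalsₗ d Λ ⁻¹' CRT d Λ T F) :=
        Set.image_mono fun ρ hρ => ⟨hρ.1, ρ, hρ.1, fun _ => rfl, hρ.2⟩

theorem coneRT_eq : coneRT d T F = {V | ∃ α : ℝ, 0 ≤ α ∧ ∃ η ∈ SRT d T F, V = α • η} := by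
  simp only [coneRT, SRT, Set.mem_ofPred_eq, and_assoc]

theorem coneRT_inter_trace_eq_one : coneRT d T F ∩ {V | V.trace = 1} = SRT d T F := by
  refine subset_antisymm ?_ fun ρ hρ =>
    ⟨⟨1, zero_le_one, ρ, hρ.1, hρ.2, (one_smul ℝ ρ).symm⟩, hρ.1.2⟩
  rintro _ ⟨⟨α, -, η, hη, hηF, rfl⟩, htr⟩
  have hα : α = 1 := by
    rw [Set.mem_ofPred_eq, Matrix.trace_smul, hη.2, Complex.real_smul, mul_one] at htr
    exact_mod_cast htr
  rw [hα, one_smul]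
  exact ⟨hη, hηF⟩

end FreeSets

/-- Lemma 1 of the paper. Assuming the target `T` is contained in
some `X₀ ∈ Λ`, the following are equivalent: `F` is convex; `C_{R|T,Λ}` is convex;
`S_{R|T}` is convex; the cone `𝒞_{R|T}` is convex. -/
theorem convexity_tfae
    {ι : Type} [Fintype ι] [DecidableEq ι]
    (d : ι → Type) [∀ i, Fintype (d i)] [∀ i, DecidableEq (d i)] [∀ i, Nonempty (d i)]
    (Λ : Finset (Finset ι)) (T : Finset ι) (F : Set (SubMat d T))
    (hF : ∀ η ∈ F, IsState η)
    (hT : ∃ X₀ ∈ Λ, T ⊆ X₀) :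
    List.TFAE [Convex ℝ F, Convex ℝ (CRT d Λ T F), Convex ℝ (SRT d T F),
      Convex ℝ (coneRT d T F)] := by
  obtain ⟨X₀, hX₀, hTX⟩ := hT
  have hptrace : ∀ {s}, Convex ℝ s → Convex ℝ (ptrace d T '' s) :=
    fun hs => hs.linear_image ((ptraceₗ d T).restrictScalars ℝ)
  tfae_have 1 → 3 := fun hFc =>
    convex_setOf_isState.inter (hFc.linear_preimage ((ptraceₗ d T).restrictScalars ℝ))
  tfae_have 3 → 1 := fun hS => image_ptrace_SRT d T F hF ▸ hptrace hS
  tfae_have 3 → 2 := fun hS =>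
    CRT_eq_image_SRT d Λ T F ▸ hS.linear_image ((marginalsₗ d Λ).restrictScalars ℝ)
  tfae_have 2 → 1 := fun hC => image_ptrace_preimage_CRT d Λ T F hF hX₀ hTX ▸
    hptrace (convex_setOf_isState.inter (hC.linear_preimage ((marginalsₗ d Λ).restrictScalars ℝ)))
  tfae_have 3 → 4 := fun hS => coneRT_eq d T F ▸ hS.setOf_nonneg_smul
  tfae_have 4 → 3 := fun hK =>
    coneRT_inter_trace_eq_one d T F ▸ hK.inter (Matrix.convex_setOf_trace_eq 1)
  tfae_finish

end RMP
end
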